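/- arXiv:2511.08963 — 4 statements merged into one kernel-verified Lean document; each statement's English description precedes it below -/
import Mathlib

section
/- Let q be a prime power, d ≥ 1, A > 0, γ ≥ 0, and let S ⊆ F_q^d satisfy |Ŝ(m)| ≤ A q^{−(d+1)/2} (log q)^{γ} for every nonzero m ∈ F_q^d. Then for every E ⊆ F_q^d, the count ν_S(E) = #{(x, y) ∈ E × E : x − y ∈ S} satisfies | ν_S(E) − |E|² |S| q^{−d} | ≤ A q^{(d−1)/2} (log q)^{γ} |E|. In particular, for fixed K, C₀ > 0 and α > (d−1)/2, there is a constant c > 0 such that if additionally | |S| − K q^{d−1} | ≤ C₀ q^{d−1−α} and |E| ≥ c q^{(d+1)/2} (log q)^{γ}, then ν_S(E) ≥ K |E|² / (2q) for all sufficiently large q. -/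
open scoped BigOperators Pointwise

/-- Fourier transform of (the indicator of) a finite set `S ⊆ F_q^d`:
`Ŝ(m) = q^{-d} ∑_{x ∈ S} χ(-m·x)`. -/
noncomputable def ftr {F : Type} [Field F] [Fintype F] {d : ℕ} (χ : AddChar F ℂ)
    (S : Finset (Fin d → F)) (m : Fin d → F) : ℂ :=
  ((Fintype.card F : ℂ) ^ d)⁻¹ * ∑ x ∈ S, χ (-(∑ i, m i * x i))

/-- `S` is a `γ`-Salem set: `|Ŝ(m)| ≤ q^{-d} (log q)^γ |S|^{1/2}` for all `m ≠ 0`. -/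
def IsSalemSet {F : Type} [Field F] [Fintype F] {d : ℕ}
    (χ : AddChar F ℂ) (γ : ℝ) (S : Finset (Fin d → F)) : Prop :=
  ∀ m : Fin d → F, m ≠ 0 →
    ‖ftr χ S m‖ ≤
      ((Fintype.card F : ℝ) ^ d)⁻¹ * Real.log (Fintype.card F) ^ γ *
        (S.card : ℝ) ^ ((1 : ℝ) / 2)

/-- `C ⊆ E` is shattered by the hypothesis class `H_S(E) = {h_y : y ∈ E}`,
`h_y(x) = 1 ↔ x - y ∈ S`. -/
def Shatters {V : Type} [Sub V] (E S C : Finset V) : Prop :=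
  C ⊆ E ∧ ∀ I ⊆ C, ∃ y ∈ E, ∀ x ∈ C, (x - y ∈ S ↔ x ∈ I)

/-- VC-dimension of the hypothesis class `H_S(E)`: the largest size of a shattered
subset of `E`. -/
noncomputable def vcDim {V : Type} [Sub V] (E S : Finset V) : ℕ :=
  sSup {n | ∃ C : Finset V, C.card = n ∧ Shatters E S C}

/-!
Expanding the indicator of `S` in characters gives
`ν_S(E) = ∑_m Ŝ(m) |∑_{x ∈ E} χ(m·x)|²`. The term `m = 0` is `|E|²|S|q^{-d}`, and the
others are bounded by `sup_{m ≠ 0} |Ŝ(m)|` times `∑_m |∑_{x ∈ E} χ(m·x)|² = q^d |E|`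
(Plancherel). For the lower bound, `|S| ≥ (3/4) K q^{d-1}` as soon as `q^α ≥ 4C₀/K`, and the
error term is at most `K|E|²/(4q)` as soon as `|E| ≥ (4A/K) q^{(d+1)/2} (log q)^γ`.
-/

open Finset Matrix

section ExpSum

variable {F ι : Type*} [CommRing F] [Fintype ι]

noncomputable def expSum (χ : AddChar F ℂ) (E : Finset (ι → F)) (m : ι → F) : ℂ :=
  ∑ x ∈ E, χ (m ⬝ᵥ x)

lemma expSum_zero (χ : AddChar F ℂ) (E : Finset (ι → F)) : expSum χ E 0 = #E := by
  simp [expSum]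

lemma sum_sum_addChar_dotProduct_sub [Finite F] (χ : AddChar F ℂ) (E : Finset (ι → F))
    (m : ι → F) :
    ∑ x ∈ E, ∑ y ∈ E, χ (m ⬝ᵥ (x - y)) = (‖expSum χ E m‖ ^ 2 : ℝ) := by
  simp only [dotProduct_sub, AddChar.map_sub_eq_div, div_eq_mul_inv, AddChar.inv_apply_eq_conj]
  rw [← Finset.sum_mul_sum, ← map_sum (starRingEnd ℂ), Complex.ofReal_pow]
  exact Complex.mul_conj' _

end ExpSum

section Orthogonality

variable {F ι : Type*} [Field F] [Fintype F] [Fintype ι] [DecidableEq ι]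

lemma AddChar.sum_dotProduct_eq_ite {χ : AddChar F ℂ} (hχ : χ ≠ 1)
    (v : ι → F) [Decidable (v = 0)] :
    ∑ m : ι → F, χ (m ⬝ᵥ v) =
      if v = 0 then (Fintype.card F : ℂ) ^ Fintype.card ι else 0 := by
  split_ifs with hv
  · simp [hv]
  obtain ⟨i, hi⟩ := Function.ne_iff.1 hv
  obtain ⟨a, ha⟩ := AddChar.ne_one_iff.1 hχ
  let ψ : AddChar (ι → F) ℂ :=
    χ.compAddMonoidHom (AddMonoidHom.mk' (· ⬝ᵥ v) fun a b => add_dotProduct a b v)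
  have hψ : ψ ≠ 1 := AddChar.ne_one_iff.2
    ⟨Pi.single i (a / v i), by simpa [ψ, single_dotProduct, div_mul_cancel₀ _ hi] using ha⟩
  exact AddChar.sum_eq_zero_of_ne_one hψ

lemma sum_norm_expSum_sq {χ : AddChar F ℂ} (hχ : χ ≠ 1) (E : Finset (ι → F)) :
    ∑ m, ‖expSum χ E m‖ ^ 2 = (Fintype.card F : ℝ) ^ Fintype.card ι * #E := by
  classical
  apply Complex.ofReal_injective
  rw [Complex.ofReal_sum]
  simp_rw [← sum_sum_addChar_dotProduct_sub]
  calc ∑ m, ∑ x ∈ E, ∑ y ∈ E, χ (m ⬝ᵥ (x - y))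
      = ∑ x ∈ E, ∑ y ∈ E, ∑ m, χ (m ⬝ᵥ (x - y)) := by
        rw [Finset.sum_comm]; exact Finset.sum_congr rfl fun _ _ => Finset.sum_comm
    _ = ∑ x ∈ E, ∑ y ∈ E,
          if x = y then (Fintype.card F : ℂ) ^ Fintype.card ι else 0 := by
        simp_rw [AddChar.sum_dotProduct_eq_ite hχ, sub_eq_zero]
    _ = _ := by simp [mul_comm]

end Orthogonality

section EdgeCount

variable {F : Type} [Field F] [Fintype F] {d : ℕ}

lemma ftr_zero (χ : AddChar F ℂ) (S : Finset (Fin d → F)) :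
    ftr χ S 0 = #S / (Fintype.card F : ℂ) ^ d := by
  simp [ftr, div_eq_inv_mul]

lemma sum_ftr_mul_addChar [DecidableEq F] {χ : AddChar F ℂ} (hχ : χ ≠ 1)
    (S : Finset (Fin d → F)) (v : Fin d → F) [Decidable (v ∈ S)] :
    ∑ m, ftr χ S m * χ (m ⬝ᵥ v) = if v ∈ S then 1 else 0 := by
  have hq : (Fintype.card F : ℂ) ^ d ≠ 0 :=
    pow_ne_zero _ (Nat.cast_ne_zero.2 Fintype.card_ne_zero)
  have hterm : ∀ m, ftr χ S m * χ (m ⬝ᵥ v) =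
      ((Fintype.card F : ℂ) ^ d)⁻¹ * ∑ s ∈ S, χ (m ⬝ᵥ (v - s)) := by
    intro m
    simp only [ftr, mul_assoc, Finset.sum_mul, ← AddChar.map_add_eq_mul, dotProduct_sub]
    congr! 3
    exact neg_add_eq_sub _ _
  simp_rw [hterm, ← Finset.mul_sum]
  rw [Finset.sum_comm]
  simp_rw [AddChar.sum_dotProduct_eq_ite hχ, Fintype.card_fin, sub_eq_zero, Finset.sum_ite_eq]
  split_ifs <;> simp [hq]

lemma card_filter_sub_mem_eq_sum [DecidableEq F] {χ : AddChar F ℂ} (hχ : χ ≠ 1)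
    (S E : Finset (Fin d → F)) :
    (#{p ∈ E ×ˢ E | p.1 - p.2 ∈ S} : ℂ) =
      ∑ m, ftr χ S m * (‖expSum χ E m‖ ^ 2 : ℝ) := by
  rw [Finset.card_filter, Nat.cast_sum, Finset.sum_product]
  simp_rw [← sum_sum_addChar_dotProduct_sub, Finset.mul_sum]
  symm
  rw [Finset.sum_comm]
  refine Finset.sum_congr rfl fun x _ => ?_
  rw [Finset.sum_comm]
  refine Finset.sum_congr rfl fun y _ => ?_
  rw [sum_ftr_mul_addChar hχ, Nat.cast_ite, Nat.cast_one, Nat.cast_zero]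

lemma abs_card_filter_sub_mem_sub_le [DecidableEq F] {χ : AddChar F ℂ} (hχ : χ ≠ 1)
    (S E : Finset (Fin d → F)) {B : ℝ} (hB : 0 ≤ B)
    (hS : ∀ m, m ≠ 0 → ‖ftr χ S m‖ ≤ B) :
    |(#{p ∈ E ×ˢ E | p.1 - p.2 ∈ S} : ℝ) - #E ^ 2 * #S / (Fintype.card F : ℝ) ^ d|
      ≤ B * (Fintype.card F : ℝ) ^ d * #E := by
  have hsplit :
      (#{p ∈ E ×ˢ E | p.1 - p.2 ∈ S} : ℂ) - #E ^ 2 * #S / (Fintype.card F : ℂ) ^ d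
      = ∑ m ∈ univ.erase 0, ftr χ S m * (‖expSum χ E m‖ ^ 2 : ℝ) := by
    rw [card_filter_sub_mem_eq_sum hχ, ← Finset.add_sum_erase _ _ (mem_univ 0), ftr_zero,
      expSum_zero, Complex.norm_natCast]
    push_cast
    ring
  calc |(#{p ∈ E ×ˢ E | p.1 - p.2 ∈ S} : ℝ) - #E ^ 2 * #S / (Fintype.card F : ℝ) ^ d|
      = ‖∑ m ∈ univ.erase 0, ftr χ S m * (‖expSum χ E m‖ ^ 2 : ℝ)‖ := by
        rw [← hsplit, ← Real.norm_eq_abs, ← Complex.norm_real]; push_cast; rfl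
    _ ≤ ∑ m ∈ univ.erase 0, B * ‖expSum χ E m‖ ^ 2 := by
        refine (norm_sum_le _ _).trans (Finset.sum_le_sum fun m hm => ?_)
        rw [norm_mul, Complex.norm_real, Real.norm_of_nonneg (sq_nonneg _)]
        exact mul_le_mul_of_nonneg_right (hS m (Finset.ne_of_mem_erase hm)) (sq_nonneg _)
    _ ≤ ∑ m, B * ‖expSum χ E m‖ ^ 2 :=
        Finset.sum_le_sum_of_subset_of_nonneg (Finset.erase_subset _ _)
          fun _ _ _ => mul_nonneg hB (sq_nonneg _)
    _ = B * (Fintype.card F : ℝ) ^ d * #E := by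
        rw [← Finset.mul_sum, sum_norm_expSum_sq hχ, Fintype.card_fin, mul_assoc]

lemma abs_card_filter_sub_mem_sub_le_rpow [DecidableEq F] {χ : AddChar F ℂ} (hχ : χ ≠ 1)
    (S : Finset (Fin d → F)) {A γ : ℝ} (hA : 0 ≤ A)
    (hS : ∀ m, m ≠ 0 → ‖ftr χ S m‖ ≤
      A * (Fintype.card F : ℝ) ^ (-(((d : ℝ) + 1) / 2)) * Real.log (Fintype.card F) ^ γ)
    (E : Finset (Fin d → F)) :
    |(#{p ∈ E ×ˢ E | p.1 - p.2 ∈ S} : ℝ) -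
        #E ^ 2 * #S * (Fintype.card F : ℝ) ^ (-(d : ℝ))| ≤
      A * (Fintype.card F : ℝ) ^ (((d : ℝ) - 1) / 2) * Real.log (Fintype.card F) ^ γ * #E := by
  set q : ℝ := (Fintype.card F : ℝ)
  have hq : 0 < q := Nat.cast_pos.2 Fintype.card_pos
  have hB : 0 ≤ A * q ^ (-(((d : ℝ) + 1) / 2)) * Real.log q ^ γ :=
    mul_nonneg (mul_nonneg hA (by positivity))
      (Real.rpow_nonneg (Real.log_nonneg (Nat.one_le_cast.2 Fintype.card_pos)) _)
  have hexp : q ^ (-(((d : ℝ) + 1) / 2)) * q ^ d = q ^ (((d : ℝ) - 1) / 2) := by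
    rw [← Real.rpow_natCast, ← Real.rpow_add hq]
    ring_nf
  convert abs_card_filter_sub_mem_sub_le hχ S E hB hS using 2
  · rw [Real.rpow_neg hq.le, Real.rpow_natCast, div_eq_mul_inv]
  · rw [← hexp]
    ring

lemma mul_sq_div_two_le_card_filter_sub_mem [DecidableEq F] {χ : AddChar F ℂ} (hχ : χ ≠ 1)
    (S : Finset (Fin d → F)) {A γ K C₀ α : ℝ} (hA : 0 ≤ A) (hK : 0 < K)
    (hS : ∀ m, m ≠ 0 → ‖ftr χ S m‖ ≤
      A * (Fintype.card F : ℝ) ^ (-(((d : ℝ) + 1) / 2)) * Real.log (Fintype.card F) ^ γ)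
    (hS_card : |(#S : ℝ) - K * (Fintype.card F : ℝ) ^ ((d : ℝ) - 1)| ≤
      C₀ * (Fintype.card F : ℝ) ^ ((d : ℝ) - 1 - α))
    (hqα : 4 * C₀ / K ≤ (Fintype.card F : ℝ) ^ α) (E : Finset (Fin d → F))
    (hE : 4 * A / K * (Fintype.card F : ℝ) ^ (((d : ℝ) + 1) / 2) *
      Real.log (Fintype.card F) ^ γ ≤ #E) :
    K * (#E : ℝ) ^ 2 / (2 * Fintype.card F) ≤ #{p ∈ E ×ˢ E | p.1 - p.2 ∈ S} := by
  have hedge := abs_le.1 (abs_card_filter_sub_mem_sub_le_rpow hχ S hA hS E)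
  set q : ℝ := (Fintype.card F : ℝ)
  set L := Real.log q ^ γ
  set e : ℝ := (#E : ℝ)
  have hq0 : 0 < q := Nat.cast_pos.2 Fintype.card_pos
  have he : 0 ≤ e := Nat.cast_nonneg _
  have hS_large : 3 / 4 * K * q ^ ((d : ℝ) - 1) ≤ #S := by
    have h := (abs_le.1 hS_card).1
    rw [Real.rpow_sub hq0 _ α] at h
    have : C₀ * (q ^ ((d : ℝ) - 1) / q ^ α) ≤ K / 4 * q ^ ((d : ℝ) - 1) := by
      rw [div_le_iff₀ hK] at hqα
      rw [mul_div_assoc', div_le_iff₀ (by positivity)]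
      nlinarith [Real.rpow_pos_of_pos hq0 ((d : ℝ) - 1)]
    linarith
  have hmain : 3 / 4 * K * e ^ 2 / q ≤ e ^ 2 * #S * q ^ (-(d : ℝ)) := by
    have hq' : q ^ ((d : ℝ) - 1) * q ^ (-(d : ℝ)) = q⁻¹ := by
      rw [← Real.rpow_add hq0, ← Real.rpow_neg_one]
      ring_nf
    calc 3 / 4 * K * e ^ 2 / q
        = e ^ 2 * (3 / 4 * K * q ^ ((d : ℝ) - 1)) * q ^ (-(d : ℝ)) := by
          rw [mul_assoc (e ^ 2), mul_assoc (3 / 4 * K), hq']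
          ring
      _ ≤ e ^ 2 * #S * q ^ (-(d : ℝ)) := by gcongr
  have herror : A * q ^ (((d : ℝ) - 1) / 2) * L * e ≤ K * e ^ 2 / (4 * q) := by
    have hq' : q ^ (((d : ℝ) + 1) / 2) = q ^ (((d : ℝ) - 1) / 2) * q := by
      rw [← Real.rpow_add_one hq0.ne']
      ring_nf
    rw [hq', div_mul_eq_mul_div, div_mul_eq_mul_div, div_le_iff₀ hK] at hE
    rw [le_div_iff₀ (by positivity)]
    nlinarith [mul_le_mul_of_nonneg_right hE he]
  have : K * e ^ 2 / (2 * q) = 3 / 4 * K * e ^ 2 / q - K * e ^ 2 / (4 * q) := by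
    field_simp
    ring
  linarith

end EdgeCount

theorem edge_count_estimate_general
    (d : ℕ) (hd : 1 ≤ d) (A γ : ℝ) (hA : 0 < A)
    (K C₀ α : ℝ) (hK : 0 < K) (hα : ((d : ℝ) - 1) / 2 < α) :
    (∀ (F : Type) [Field F] [Fintype F] [DecidableEq F],
      ∀ χ : AddChar F ℂ, χ ≠ 1 →
      ∀ S : Finset (Fin d → F),
        (∀ m : Fin d → F, m ≠ 0 →
          ‖ftr χ S m‖ ≤
            A * (Fintype.card F : ℝ) ^ (-(((d : ℝ) + 1) / 2)) *
              Real.log (Fintype.card F) ^ γ) →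
        ∀ E : Finset (Fin d → F),
          |((((E ×ˢ E).filter (fun p => p.1 - p.2 ∈ S)).card : ℝ))
              - (E.card : ℝ) ^ 2 * (S.card : ℝ) * (Fintype.card F : ℝ) ^ (-(d : ℝ))|
            ≤ A * (Fintype.card F : ℝ) ^ (((d : ℝ) - 1) / 2) *
                Real.log (Fintype.card F) ^ γ * (E.card : ℝ)) ∧
    (∃ c : ℝ, 0 < c ∧ ∃ Q : ℕ,
      ∀ (F : Type) [Field F] [Fintype F] [DecidableEq F],
        Q ≤ Fintype.card F →
        ∀ χ : AddChar F ℂ, χ ≠ 1 →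
        ∀ S : Finset (Fin d → F),
          (∀ m : Fin d → F, m ≠ 0 →
            ‖ftr χ S m‖ ≤
              A * (Fintype.card F : ℝ) ^ (-(((d : ℝ) + 1) / 2)) *
                Real.log (Fintype.card F) ^ γ) →
          |(S.card : ℝ) - K * (Fintype.card F : ℝ) ^ ((d : ℝ) - 1)| ≤
            C₀ * (Fintype.card F : ℝ) ^ ((d : ℝ) - 1 - α) →
          ∀ E : Finset (Fin d → F),
            c * (Fintype.card F : ℝ) ^ (((d : ℝ) + 1) / 2) *
                Real.log (Fintype.card F) ^ γ ≤ (E.card : ℝ) →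
            K * (E.card : ℝ) ^ 2 / (2 * (Fintype.card F : ℝ)) ≤
              (((E ×ˢ E).filter (fun p => p.1 - p.2 ∈ S)).card : ℝ)) := by
  have hα₀ : 0 < α := lt_of_le_of_lt (div_nonneg (by simpa using hd) zero_le_two) hα
  obtain ⟨Q, hQ⟩ := Filter.eventually_atTop.1 <|
    ((tendsto_rpow_atTop hα₀).comp tendsto_natCast_atTop_atTop).eventually_ge_atTop
      (4 * C₀ / K)
  exact ⟨fun F _ _ _ χ hχ S hS E => abs_card_filter_sub_mem_sub_le_rpow hχ S hA.le hS E,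
    4 * A / K, by positivity, Q, fun F _ _ _ hQF χ hχ S hS hS_card E hE =>
      mul_sq_div_two_le_card_filter_sub_mem hχ S hA.le hK hS hS_card (hQ _ hQF) E hE⟩

/-- edge-count estimate `ν_S(E) = |E|²|S|/q^d + error`, and the
resulting positive lower bound `ν_S(E) ≥ K|E|²/(2q)` for large `E` and large `q`. -/
theorem edge_count_estimate
    (d : ℕ) (hd : 1 ≤ d) (A γ : ℝ) (hA : 0 < A) (hγ : 0 ≤ γ)
    (K C₀ α : ℝ) (hK : 0 < K) (hC₀ : 0 < C₀) (hα : ((d : ℝ) - 1) / 2 < α) :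
    (∀ (F : Type) [Field F] [Fintype F] [DecidableEq F],
      ∀ χ : AddChar F ℂ, χ ≠ 1 →
      ∀ S : Finset (Fin d → F),
        (∀ m : Fin d → F, m ≠ 0 →
          ‖ftr χ S m‖ ≤
            A * (Fintype.card F : ℝ) ^ (-(((d : ℝ) + 1) / 2)) *
              Real.log (Fintype.card F) ^ γ) →
        ∀ E : Finset (Fin d → F),
          |((((E ×ˢ E).filter (fun p => p.1 - p.2 ∈ S)).card : ℝ))
              - (E.card : ℝ) ^ 2 * (S.card : ℝ) * (Fintype.card F : ℝ) ^ (-(d : ℝ))|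
            ≤ A * (Fintype.card F : ℝ) ^ (((d : ℝ) - 1) / 2) *
                Real.log (Fintype.card F) ^ γ * (E.card : ℝ)) ∧
    (∃ c : ℝ, 0 < c ∧ ∃ Q : ℕ,
      ∀ (F : Type) [Field F] [Fintype F] [DecidableEq F],
        Q ≤ Fintype.card F →
        ∀ χ : AddChar F ℂ, χ ≠ 1 →
        ∀ S : Finset (Fin d → F),
          (∀ m : Fin d → F, m ≠ 0 →
            ‖ftr χ S m‖ ≤
              A * (Fintype.card F : ℝ) ^ (-(((d : ℝ) + 1) / 2)) *
                Real.log (Fintype.card F) ^ γ) →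
          |(S.card : ℝ) - K * (Fintype.card F : ℝ) ^ ((d : ℝ) - 1)| ≤
            C₀ * (Fintype.card F : ℝ) ^ ((d : ℝ) - 1 - α) →
          ∀ E : Finset (Fin d → F),
            c * (Fintype.card F : ℝ) ^ (((d : ℝ) + 1) / 2) *
                Real.log (Fintype.card F) ^ γ ≤ (E.card : ℝ) →
            K * (E.card : ℝ) ^ 2 / (2 * (Fintype.card F : ℝ)) ≤
              (((E ×ˢ E).filter (fun p => p.1 - p.2 ∈ S)).card : ℝ)) :=
  edge_count_estimate_general d hd A γ hA K C₀ α hK hα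
end

section
/- Fix constants K > 0, C₀ > 0, γ ≥ 0, an integer d ≥ 2, and an exponent α > (d−1)/2. There exists a constant c > 0 such that for every sufficiently large prime power q the following holds: suppose S ⊆ F_q^d satisfies S = −S, S is a γ-Salem set, and | |S| − K q^{d−1} | ≤ C₀ q^{d−1−α}. If E ⊆ F_q^d with |E| ≥ c q^{(7d+1)/8} (log q)^{γ/4}, then there exist a point z ∈ F_q^d and elements s₁, s₂, s₃ ∈ S such that the seven points z, z+s₁, z+s₂, z+s₃, z+s₁+s₂, z+s₁+s₃, z+s₂+s₃ are pairwise distinct and all belong to E. (Equivalently, the graph G_S(E) with vertex set E and edges x ∼ y whenever x − y ∈ S contains a copy of the 3-dimensional cube graph Q₃ with one vertex deleted.) -/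
open scoped BigOperators Pointwise

/-!
Fourier analysis makes `S` pseudo-random: for every `A`, the number of pairs `(y, y + s)` in
`A × A` with `s ∈ S` is at least `|S||A|²/q^d - L|A|`, with `L = (log q)^γ |S|^{1/2}`. The
frequency `m = 0` gives the main term, and the other frequencies are controlled by the Salem
bound together with Plancherel for `A`. Averaging over `S` then produces `s ∈ S`, outside any
eight forbidden values, with `|A ∩ (A - s)| ≥ 2ε²q^d` as soon as `|A| ≥ 2εq^d` and
`(L + 8)/|S| ≤ ε`. Three such steps, starting from `ε = |E|/(2q^d)` and continuing with `ε²` and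
`ε⁴`, give a point `z` with `z + {0, s₁} + {0, s₂} + {0, s₃} ⊆ E`. The forbidden values keep the
seven points apart. The lower bound on `|E|` is what makes
`(L + 8)/|S| ≍ (log q)^γ q^{-(d-1)/2}` at most `ε⁴`.
-/

open Finset

theorem pairwise_ne_cube_minus_vertex {G : Type*} [AddCommGroup G] [DecidableEq G]
    {z s₁ s₂ s₃ : G} (h₃ : s₃ ≠ 0)
    (h₂ : s₂ ∉ ({0, s₃, -s₃} : Finset G))
    (h₁ : s₁ ∉ ({0, s₂, -s₂, s₃, -s₃, s₂ + s₃, s₂ - s₃, s₃ - s₂} : Finset G)) :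
    List.Pairwise (· ≠ ·) [z, z + s₁, z + s₂, z + s₃, z + s₁ + s₂, z + s₁ + s₃, z + s₂ + s₃] := by
  simp only [mem_insert, mem_singleton, not_or] at h₁ h₂
  simp only [ne_eq, add_assoc, List.pairwise_cons, List.mem_cons, List.not_mem_nil, or_false,
    forall_eq_or_imp, left_eq_add, forall_eq, add_right_inj, right_eq_add, add_left_inj,
    IsEmpty.forall_iff, implies_true, List.Pairwise.nil, and_self, and_true]
  grind

theorem Finset.exists_mem_notMem_div_le {α : Type*} [DecidableEq α] {S B : Finset α}
    {f : α → ℝ} {a T : ℝ} (hf0 : ∀ s ∈ S, 0 ≤ f s) (hfa : ∀ s ∈ S, f s ≤ a)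
    (hT : T ≤ ∑ s ∈ S, f s) (hB : B.card < S.card) :
    ∃ s ∈ S, s ∉ B ∧ (T - B.card * a) / S.card ≤ f s := by
  have hgood : (S \ B).Nonempty := card_pos.mp (by have := le_card_sdiff B S; omega)
  have hS : (0 : ℝ) < S.card := by exact_mod_cast (Nat.zero_le _).trans_lt hB
  have ha : 0 ≤ a := by
    obtain ⟨s, hs⟩ := hgood
    exact (hf0 s (mem_sdiff.mp hs).1).trans (hfa s (mem_sdiff.mp hs).1)
  set t := (T - B.card * a) / S.card
  suffices ∃ s ∈ S \ B, t ≤ f s by simpa only [mem_sdiff, and_assoc] using this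
  by_cases ht : t ≤ 0
  · obtain ⟨s, hs⟩ := hgood
    exact ⟨s, hs, ht.trans (hf0 s (mem_sdiff.mp hs).1)⟩
  refine exists_le_of_sum_le hgood ?_
  have hbad : ∑ s ∈ S ∩ B, f s ≤ B.card * a := calc
    _ ≤ ∑ s ∈ S ∩ B, a := sum_le_sum fun s hs => hfa s (mem_inter.mp hs).1
    _ = (S ∩ B).card * a := by rw [sum_const, nsmul_eq_mul]
    _ ≤ B.card * a := by gcongr; exact inter_subset_right
  calc ∑ _ ∈ S \ B, t = (S \ B).card * t := by rw [sum_const, nsmul_eq_mul]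
    _ ≤ S.card * t := by gcongr; exacts [(not_le.mp ht).le, sdiff_subset]
    _ = T - B.card * a := by simp only [t]; field_simp
    _ ≤ ∑ s ∈ S \ B, f s := by linarith [sum_inter_add_sum_sdiff S B f]

section Mixing

variable {G : Type*} [AddCommGroup G] [Fintype G] [DecidableEq G] {S : Finset G} {L : ℝ}

/-- The Cayley graph of `S` has, inside every `A`, at least the number of edges expected for a
random set of the same size, up to an error `L |A|`. -/
def IsMixing (S : Finset G) (L : ℝ) : Prop :=
  ∀ A : Finset G, (S.card : ℝ) * A.card ^ 2 / Fintype.card G - L * A.card ≤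
    ∑ s ∈ S, ((A.filter (· + s ∈ A)).card : ℝ)

theorem IsMixing.nonneg (hS : IsMixing S L) : 0 ≤ L := by
  have h := hS univ
  have hN : (0 : ℝ) < Fintype.card G := Nat.cast_pos.mpr Fintype.card_pos
  simp only [card_univ, sq, ← mul_assoc, mul_div_cancel_right₀ _ hN.ne', mem_univ, filter_true,
    sum_const, nsmul_eq_mul, tsub_le_iff_right, le_add_iff_nonneg_right] at h
  exact nonneg_of_mul_nonneg_left h hN

theorem IsMixing.exists_two_mul_sq_le_card_filter (hS : IsMixing S L) {B : Finset G} {n : ℕ}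
    (hBn : B.card ≤ n) (hnS : n < S.card) {ε : ℝ} (hε : 0 ≤ ε) (hL : (L + n) / S.card ≤ ε)
    {A : Finset G} (hA : 2 * ε * Fintype.card G ≤ A.card) :
    ∃ s ∈ S, s ∉ B ∧ 2 * ε ^ 2 * Fintype.card G ≤ (A.filter (· + s ∈ A)).card := by
  obtain ⟨s, hs, hsB, hsA⟩ := exists_mem_notMem_div_le (fun _ _ => Nat.cast_nonneg _)
    (fun s _ => Nat.cast_le.mpr (card_filter_le A _)) (hS A) (hBn.trans_lt hnS)
  refine ⟨s, hs, hsB, le_trans ?_ hsA⟩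
  have hN : (0 : ℝ) < Fintype.card G := Nat.cast_pos.mpr Fintype.card_pos
  have hSpos : (0 : ℝ) < S.card := by exact_mod_cast (Nat.zero_le _).trans_lt (hBn.trans_lt hnS)
  have hW : (L + B.card) / S.card ≤ ε :=
    le_trans (div_le_div_of_nonneg_right (by gcongr) hSpos.le) hL
  have hεA : 2 * ε * Fintype.card G * (ε * Fintype.card G) ≤
      A.card * (A.card - ε * Fintype.card G) :=
    mul_le_mul hA (by linarith) (by positivity) (Nat.cast_nonneg _)
  calc 2 * ε ^ 2 * Fintype.card G ≤ A.card ^ 2 / Fintype.card G - ε * A.card := by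
        rw [le_sub_iff_add_le, le_div_iff₀ hN]; nlinarith
    _ ≤ A.card ^ 2 / Fintype.card G - (L + B.card) / S.card * A.card := by gcongr
    _ = _ := by field_simp; ring

theorem IsMixing.exists_cube_minus_vertex (hS : IsMixing S L) (hS8 : 8 < S.card) {E : Finset G}
    (hL : (L + 8) / S.card ≤ (E.card / (2 * Fintype.card G)) ^ 4) :
    ∃ z s₁ s₂ s₃ : G, s₁ ∈ S ∧ s₂ ∈ S ∧ s₃ ∈ S ∧
      List.Pairwise (· ≠ ·) [z, z + s₁, z + s₂, z + s₃, z + s₁ + s₂, z + s₁ + s₃, z + s₂ + s₃] ∧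
      ∀ p ∈ [z, z + s₁, z + s₂, z + s₃, z + s₁ + s₂, z + s₁ + s₃, z + s₂ + s₃], p ∈ E := by
  set ε : ℝ := E.card / (2 * Fintype.card G) with hε
  have hN : (0 : ℝ) < Fintype.card G := Nat.cast_pos.mpr Fintype.card_pos
  have hε0 : 0 < ε := by
    have : 0 < (L + 8) / S.card := div_pos (by linarith [hS.nonneg]) (by positivity)
    exact lt_of_pow_lt_pow_left₀ 4 (by positivity) (by simpa using this.trans_le hL)
  have hε1 : ε ≤ 1 := by
    rw [div_le_one (by positivity)]
    have : (E.card : ℝ) ≤ Fintype.card G := by exact_mod_cast card_le_univ E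
    linarith
  have h42 : ε ^ 4 ≤ ε ^ 2 := pow_le_pow_of_le_one hε0.le hε1 (by norm_num)
  have h21 : ε ^ 2 ≤ ε := by simpa using pow_le_pow_of_le_one hε0.le hε1 one_le_two
  obtain ⟨s₃, hs₃, h₃, hE₁⟩ := hS.exists_two_mul_sq_le_card_filter (B := {0}) (by simp) hS8
    hε0.le (hL.trans (h42.trans h21)) (A := E) (by rw [hε]; field_simp; exact le_rfl)
  obtain ⟨s₂, hs₂, h₂, hE₂⟩ := hS.exists_two_mul_sq_le_card_filter (B := {0, s₃, -s₃})
    (by grind [card_insert_le]) hS8 (by positivity) (hL.trans h42) hE₁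
  obtain ⟨s₁, hs₁, h₁, hE₃⟩ := hS.exists_two_mul_sq_le_card_filter
    (B := {0, s₂, -s₂, s₃, -s₃, s₂ + s₃, s₂ - s₃, s₃ - s₂}) (by grind [card_insert_le]) hS8
    (by positivity) (by rwa [← pow_mul]) hE₂
  obtain ⟨z, hz⟩ := card_pos.mp <| Nat.cast_pos.mp <| hE₃.trans_lt' (by positivity)
  refine ⟨z, s₁, s₂, s₃, hs₁, hs₂, hs₃, pairwise_ne_cube_minus_vertex (by simpa using h₃) h₂ h₁, ?_⟩
  simp only [mem_filter] at hz
  simp only [List.mem_cons, List.not_mem_nil, or_false]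
  rintro p (rfl | rfl | rfl | rfl | rfl | rfl | rfl) <;> tauto

end Mixing

section Fourier

variable {F : Type*} [Field F] [Fintype F] [DecidableEq F] {ι : Type*} [Fintype ι] [DecidableEq ι]

theorem sum_addChar_dotProduct {χ : AddChar F ℂ} (hχ : χ ≠ 1) (u : ι → F) :
    ∑ m : ι → F, χ (m ⬝ᵥ u) = if u = 0 then (Fintype.card (ι → F) : ℂ) else 0 := by
  split_ifs with hu
  · simp [hu]
  obtain ⟨i, hi⟩ := Function.ne_iff.mp hu
  obtain ⟨a, ha⟩ := AddChar.ne_one_iff.mp hχ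
  let ψ : AddChar (ι → F) ℂ :=
    χ.compAddMonoidHom (AddMonoidHom.mk' (· ⬝ᵥ u) fun m m' => add_dotProduct m m' u)
  have hψ : ψ ≠ 1 :=
    AddChar.ne_one_iff.mpr ⟨Pi.single i (a / u i), by simpa [ψ, div_mul_cancel₀ a hi] using ha⟩
  exact AddChar.sum_eq_zero_of_ne_one hψ

/-- For `ι = Fin d`, this is `q^d • ftr χ A m`. -/
def fourierSum (χ : AddChar F ℂ) (A : Finset (ι → F)) (m : ι → F) : ℂ :=
  ∑ x ∈ A, χ (-(m ⬝ᵥ x))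

theorem sum_fourierSum_mul_norm_sq {χ : AddChar F ℂ} (hχ : χ ≠ 1) (S A : Finset (ι → F)) :
    ∑ m, fourierSum χ S m * ‖fourierSum χ A m‖ ^ 2
      = Fintype.card (ι → F) * ∑ s ∈ S, ((A.filter (· + s ∈ A)).card : ℂ) := by
  have expand (m : ι → F) : fourierSum χ S m * ‖fourierSum χ A m‖ ^ 2
      = ∑ s ∈ S, ∑ y ∈ A, ∑ x ∈ A, χ (m ⬝ᵥ (x - (y + s))) := by
    rw [← Complex.conj_mul']
    simp only [fourierSum, map_sum, ← AddChar.map_neg_eq_conj, neg_neg, sum_mul, mul_sum]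
    rw [sum_comm_cycle]
    refine sum_congr rfl fun s _ => sum_congr rfl fun y _ => sum_congr rfl fun x _ => ?_
    rw [dotProduct_sub, dotProduct_add, ← AddChar.map_add_eq_mul, ← AddChar.map_add_eq_mul]
    congr 1; ring
  simp_rw [expand, sum_comm (s := univ), sum_addChar_dotProduct hχ, sub_eq_zero, sum_ite_eq',
    ← sum_filter, sum_const, nsmul_eq_mul, mul_sum, mul_comm]

theorem sum_norm_fourierSum_sq {χ : AddChar F ℂ} (hχ : χ ≠ 1) (A : Finset (ι → F)) :
    ∑ m, ‖fourierSum χ A m‖ ^ 2 = Fintype.card (ι → F) * (A.card : ℝ) := by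
  have h := sum_fourierSum_mul_norm_sq hχ {0} A
  simp only [fourierSum, sum_singleton, dotProduct_zero, neg_zero, AddChar.map_zero_eq_one,
    one_mul, add_zero, filter_mem_eq_inter, inter_self] at h
  exact_mod_cast h

theorem isMixing_of_norm_fourierSum_le {χ : AddChar F ℂ} (hχ : χ ≠ 1) {S : Finset (ι → F)}
    {L : ℝ} (hL0 : 0 ≤ L) (hL : ∀ m ≠ 0, ‖fourierSum χ S m‖ ≤ L) : IsMixing S L := by
  intro A
  have hN : (0 : ℝ) < Fintype.card (ι → F) := by positivity
  set Φ : (ι → F) → ℂ := fun m => fourierSum χ S m * ‖fourierSum χ A m‖ ^ 2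
  have hΦ0 : Φ 0 = S.card * A.card ^ 2 := by simp [Φ, fourierSum]
  have hΦ : ∀ m ∈ univ.erase 0, ‖Φ m‖ ≤ L * ‖fourierSum χ A m‖ ^ 2 := fun m hm => by
    simp only [Φ, norm_mul, norm_pow, Complex.norm_real, norm_norm]
    exact mul_le_mul_of_nonneg_right (hL m (ne_of_mem_erase hm)) (by positivity)
  have herr : ‖∑ m ∈ univ.erase 0, Φ m‖ ≤ L * (Fintype.card (ι → F) * A.card) := calc
    _ ≤ ∑ m ∈ univ.erase 0, L * ‖fourierSum χ A m‖ ^ 2 := norm_sum_le_of_le _ hΦ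
    _ ≤ ∑ m, L * ‖fourierSum χ A m‖ ^ 2 :=
      sum_le_sum_of_subset_of_nonneg (erase_subset _ _) fun _ _ _ => by positivity
    _ = L * (Fintype.card (ι → F) * A.card) := by rw [← mul_sum, sum_norm_fourierSum_sq hχ]
  have hsplit : (Fintype.card (ι → F) * ∑ s ∈ S, ((A.filter (· + s ∈ A)).card : ℝ)
      - S.card * A.card ^ 2 : ℝ) = ∑ m ∈ univ.erase 0, Φ m := by
    push_cast
    rw [← hΦ0, ← sum_fourierSum_mul_norm_sq hχ, ← add_sum_erase _ _ (mem_univ 0)]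
    ring
  have := (abs_le.mp (((Complex.norm_real _).symm.trans (congrArg norm hsplit)).trans_le herr)).1
  rw [sub_le_iff_le_add, div_le_iff₀ hN]
  linarith

end Fourier

section Salem

variable {F : Type} [Field F] [Fintype F] {d : ℕ} {χ : AddChar F ℂ} {γ : ℝ}
  {S : Finset (Fin d → F)}

theorem IsSalemSet.norm_fourierSum_le (hS : IsSalemSet χ γ S) {m : Fin d → F} (hm : m ≠ 0) :
    ‖fourierSum χ S m‖ ≤ Real.log (Fintype.card F) ^ γ * (S.card : ℝ) ^ ((1 : ℝ) / 2) := by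
  have h := hS m hm
  rw [show ftr χ S m = ((Fintype.card F : ℂ) ^ d)⁻¹ * fourierSum χ S m from rfl, norm_mul,
    norm_inv, norm_pow, Complex.norm_natCast, mul_assoc] at h
  exact le_of_mul_le_mul_left h (by positivity)

theorem IsSalemSet.isMixing [DecidableEq F] (hS : IsSalemSet χ γ S) (hχ : χ ≠ 1) :
    IsMixing S (Real.log (Fintype.card F) ^ γ * (S.card : ℝ) ^ ((1 : ℝ) / 2)) :=
  isMixing_of_norm_fourierSum_le hχ
    (mul_nonneg (Real.rpow_nonneg (Real.log_natCast_nonneg _) _)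
      (Real.rpow_nonneg (Nat.cast_nonneg _) _))
    fun _ hm => hS.norm_fourierSum_le hm

end Salem

theorem half_mul_rpow_le_of_abs_sub_le {K C₀ q α β s : ℝ} (hK : 0 < K) (hq : 0 < q)
    (hqα : 2 * C₀ / K ≤ q ^ α) (hs : |s - K * q ^ β| ≤ C₀ * q ^ (β - α)) :
    K / 2 * q ^ β ≤ s := by
  have hqβ := Real.rpow_pos_of_pos hq β
  have hC₀ : C₀ ≤ K / 2 * q ^ α := by rw [div_le_iff₀ hK] at hqα; linarith
  have : C₀ * q ^ (β - α) ≤ K / 2 * q ^ β := by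
    rw [Real.rpow_sub hq, mul_div_assoc', div_le_iff₀ (Real.rpow_pos_of_pos hq α)]
    nlinarith
  linarith [(abs_le.mp hs).1]

theorem div_le_div_two_mul_pow_four {K P R c s e D : ℝ} (hK : 0 < K) (hP : 1 ≤ P) (hR : 0 < R)
    (hc : 0 < c) (hc8 : c ^ 8 = 2048 / K) (hD : 0 < D) (hs : K / 2 * R ^ 8 ≤ s) (hs64 : 64 ≤ s)
    (he : c * P * D / R ≤ e) :
    (P ^ 4 * √s + 8) / s ≤ (e / (2 * D)) ^ 4 := by
  have hs0 : 0 < s := by linarith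
  have h8 : 8 ≤ √s := Real.le_sqrt_of_sq_le (by linarith)
  have hP4 : 1 ≤ P ^ 4 := one_le_pow₀ hP
  have hR4 : 32 * R ^ 4 ≤ c ^ 4 * √s := by
    refine (pow_le_pow_iff_left₀ (by positivity) (by positivity) two_ne_zero).mp ?_
    rw [mul_pow, mul_pow, Real.sq_sqrt hs0.le, ← pow_mul, ← pow_mul, hc8,
      div_mul_eq_mul_div, le_div_iff₀ hK]
    norm_num
    linarith
  calc (P ^ 4 * √s + 8) / s ≤ 2 * P ^ 4 / √s := by
        have h8s : 8 ≤ P ^ 4 * √s := h8.trans (le_mul_of_one_le_left (by positivity) hP4)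
        rw [div_le_div_iff₀ hs0 (by positivity)]
        nlinarith [Real.sq_sqrt hs0.le, Real.sqrt_nonneg s]
    _ ≤ (c * P / (2 * R)) ^ 4 := by
        rw [div_pow, div_le_div_iff₀ (by positivity) (by positivity)]
        nlinarith
    _ ≤ (e / (2 * D)) ^ 4 := by
        refine pow_le_pow_left₀ (by positivity) ?_ 4
        rw [div_le_iff₀ hR] at he
        rw [div_le_div_iff₀ (by positivity) (by positivity)]
        linarith

theorem salem_error_le_density_pow {K γ q s e : ℝ} {d : ℕ} (hK : 0 < K) (hγ : 0 ≤ γ)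
    (hq : Real.exp 1 ≤ q) (hs : K / 2 * q ^ ((d : ℝ) - 1) ≤ s) (hs64 : 64 ≤ s)
    (he : (2048 / K) ^ (1 / 8 : ℝ) * q ^ ((7 * (d : ℝ) + 1) / 8) * Real.log q ^ (γ / 4) ≤ e) :
    (Real.log q ^ γ * s ^ ((1 : ℝ) / 2) + 8) / s ≤ (e / (2 * q ^ d)) ^ 4 := by
  have hq0 : 0 < q := (Real.exp_pos 1).trans_le hq
  have hlog : 1 ≤ Real.log q := (Real.le_log_iff_exp_le hq0).mpr hq
  have hR8 : (q ^ (((d : ℝ) - 1) / 8)) ^ 8 = q ^ ((d : ℝ) - 1) := by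
    rw [← Real.rpow_natCast, ← Real.rpow_mul hq0.le]; ring_nf
  have hqR : q ^ ((7 * (d : ℝ) + 1) / 8) = q ^ d / q ^ (((d : ℝ) - 1) / 8) := by
    rw [← Real.rpow_natCast, ← Real.rpow_sub hq0]; ring_nf
  have hP4 : Real.log q ^ γ = (Real.log q ^ (γ / 4)) ^ 4 := by
    rw [← Real.rpow_natCast, ← Real.rpow_mul (by positivity)]; ring_nf
  have hc8 : ((2048 / K) ^ (1 / 8 : ℝ)) ^ 8 = 2048 / K := by
    rw [← Real.rpow_natCast, ← Real.rpow_mul (by positivity)]; norm_num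
  rw [hP4, ← Real.sqrt_eq_rpow]
  refine div_le_div_two_mul_pow_four hK (Real.one_le_rpow hlog (by positivity)) (by positivity)
    (by positivity) hc8 (by positivity) (hR8 ▸ hs) hs64 ?_
  rw [hqR] at he
  convert he using 1
  ring

theorem cube_minus_vertex_general
    (K C₀ γ : ℝ) (hK : 0 < K) (hγ : 0 ≤ γ)
    (d : ℕ) (hd : 2 ≤ d) (α : ℝ) (hα : ((d : ℝ) - 1) / 2 < α) :
    ∃ c : ℝ, 0 < c ∧ ∃ Q : ℕ,
      ∀ (F : Type) [Field F] [Fintype F] [DecidableEq F],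
        Q ≤ Fintype.card F →
        ∀ χ : AddChar F ℂ, χ ≠ 1 →
        ∀ S : Finset (Fin d → F),
          (∀ x, x ∈ S ↔ -x ∈ S) →
          IsSalemSet χ γ S →
          |(S.card : ℝ) - K * (Fintype.card F : ℝ) ^ ((d : ℝ) - 1)| ≤
            C₀ * (Fintype.card F : ℝ) ^ ((d : ℝ) - 1 - α) →
          ∀ E : Finset (Fin d → F),
            c * (Fintype.card F : ℝ) ^ ((7 * (d : ℝ) + 1) / 8) *
                Real.log (Fintype.card F) ^ (γ / 4) ≤ (E.card : ℝ) →
            ∃ z s₁ s₂ s₃ : Fin d → F, s₁ ∈ S ∧ s₂ ∈ S ∧ s₃ ∈ S ∧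
              List.Pairwise (· ≠ ·)
                [z, z + s₁, z + s₂, z + s₃, z + s₁ + s₂, z + s₁ + s₃, z + s₂ + s₃] ∧
              ∀ p ∈ [z, z + s₁, z + s₂, z + s₃, z + s₁ + s₂, z + s₁ + s₃, z + s₂ + s₃],
                p ∈ E := by
  have hd1 : (0 : ℝ) < d - 1 := by
    have : (2 : ℝ) ≤ d := by exact_mod_cast hd
    linarith
  obtain ⟨Q, hQ⟩ : ∃ Q : ℕ, ∀ q ≥ Q, Real.exp 1 ≤ q ∧ 2 * C₀ / K ≤ (q : ℝ) ^ α ∧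
      128 / K ≤ (q : ℝ) ^ ((d : ℝ) - 1) :=
    Filter.eventually_atTop.mp <| tendsto_natCast_atTop_atTop.eventually <|
      (Filter.eventually_ge_atTop _).and <|
        ((tendsto_rpow_atTop (by linarith)).eventually_ge_atTop _).and
          ((tendsto_rpow_atTop hd1).eventually_ge_atTop _)
  refine ⟨(2048 / K) ^ (1 / 8 : ℝ), by positivity, Q,
    fun F _ _ _ hq χ hχ S _ hSalem hcard E hE => ?_⟩
  obtain ⟨hqe, hqα, hqd⟩ := hQ _ hq
  have hSK := half_mul_rpow_le_of_abs_sub_le hK (by positivity) hqα hcard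
  have hS64 : 64 ≤ (S.card : ℝ) := by rw [div_le_iff₀ hK] at hqd; linarith
  refine (hSalem.isMixing hχ).exists_cube_minus_vertex
    (by exact_mod_cast (show (8 : ℝ) < S.card by linarith)) ?_
  rw [Fintype.card_fun, Fintype.card_fin, Nat.cast_pow]
  exact salem_error_le_density_pow hK hγ hqe hSK hS64 hE

/-- cube minus a vertex: for a symmetric γ-Salem set `S` of size
`≈ K q^{d-1}` and `|E| ≥ c q^{(7d+1)/8} (log q)^{γ/4}`, there are `z` and
`s₁, s₂, s₃ ∈ S` such that the seven points `z, z+s₁, z+s₂, z+s₃, z+s₁+s₂, z+s₁+s₃,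
z+s₂+s₃` are pairwise distinct and all lie in `E`. -/
theorem cube_minus_vertex
    (K C₀ γ : ℝ) (hK : 0 < K) (hC₀ : 0 < C₀) (hγ : 0 ≤ γ)
    (d : ℕ) (hd : 2 ≤ d) (α : ℝ) (hα : ((d : ℝ) - 1) / 2 < α) :
    ∃ c : ℝ, 0 < c ∧ ∃ Q : ℕ,
      ∀ (F : Type) [Field F] [Fintype F] [DecidableEq F],
        Q ≤ Fintype.card F →
        ∀ χ : AddChar F ℂ, χ ≠ 1 →
        ∀ S : Finset (Fin d → F),
          (∀ x, x ∈ S ↔ -x ∈ S) →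
          IsSalemSet χ γ S →
          |(S.card : ℝ) - K * (Fintype.card F : ℝ) ^ ((d : ℝ) - 1)| ≤
            C₀ * (Fintype.card F : ℝ) ^ ((d : ℝ) - 1 - α) →
          ∀ E : Finset (Fin d → F),
            c * (Fintype.card F : ℝ) ^ ((7 * (d : ℝ) + 1) / 8) *
                Real.log (Fintype.card F) ^ (γ / 4) ≤ (E.card : ℝ) →
            ∃ z s₁ s₂ s₃ : Fin d → F, s₁ ∈ S ∧ s₂ ∈ S ∧ s₃ ∈ S ∧
              List.Pairwise (· ≠ ·)
                [z, z + s₁, z + s₂, z + s₃, z + s₁ + s₂, z + s₁ + s₃, z + s₂ + s₃] ∧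
              ∀ p ∈ [z, z + s₁, z + s₂, z + s₃, z + s₁ + s₂, z + s₁ + s₃, z + s₂ + s₃],
                p ∈ E :=
  cube_minus_vertex_general K C₀ γ hK hγ d hd α hα
end

section
/- Let P = {(t, t²) : t ∈ ℝ} ∪ {(t, −t²) : t ∈ ℝ} ⊆ ℝ² be the symmetrized parabola. Then no set of four distinct points of ℝ² is shattered by the family of translates of P; that is, for all distinct x¹, x², x³, x⁴ ∈ ℝ² there exists a subset I ⊆ {1, 2, 3, 4} such that no y ∈ ℝ² satisfies (x^i − y ∈ P if and only if i ∈ I). Consequently, the hypothesis class {indicator of (y + P) : y ∈ ℝ²} on the domain ℝ² has VC-dimension at most 3. -/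
/-!
A point lies on the translate `v + P` iff it lies on its upper arm `y = v.2 + (x - v.1) ^ 2` or
on its lower arm `y = v.2 - (x - v.1) ^ 2`. Already the whole set and the four 3-element subsets
of four points cannot all be cut out by translates.

Two points of a vertical line lie on at most two translates, so the five translates force
distinct abscissae; order the points by ordinate. Two distinct translates share at most one point
of their upper arms and at most one of their lower arms, and no three translates all carry `p` on
the lower and `q` on the upper arm (Vieta). These incidences force the two lowest points onto the
lower and the two highest onto the upper arm of the full translate, and fix the arms of the other
translates up to five cases. In each, the relations `v.1 + w.1 = p.1 + q.1` between vertices of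
translates sharing `p` and `q` (together with chord slopes in one case) make two abscissae equal.
-/

/-- The symmetrized parabola `P = {(t, t²)} ∪ {(t, -t²)} ⊆ ℝ²`. -/
def symParabola : Set (ℝ × ℝ) :=
  (Set.range fun t : ℝ => (t, t ^ 2)) ∪ (Set.range fun t : ℝ => (t, -t ^ 2))

open Function

def OnUpperArm (v p : ℝ × ℝ) : Prop := p.2 - v.2 = (p.1 - v.1) ^ 2

def OnLowerArm (v p : ℝ × ℝ) : Prop := p.2 - v.2 = -(p.1 - v.1) ^ 2

theorem sub_mem_symParabola_iff {p v : ℝ × ℝ} :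
    p - v ∈ symParabola ↔ OnUpperArm v p ∨ OnLowerArm v p := by
  simp only [symParabola, OnUpperArm, OnLowerArm, Set.mem_union, Set.mem_range, Prod.ext_iff,
    Prod.fst_sub, Prod.snd_sub]
  constructor
  · rintro (⟨t, rfl, ht⟩ | ⟨t, rfl, ht⟩)
    exacts [Or.inl ht.symm, Or.inr ht.symm]
  · rintro (h | h)
    exacts [Or.inl ⟨_, rfl, h.symm⟩, Or.inr ⟨_, rfl, h.symm⟩]

section Arms

variable {p q v w : ℝ × ℝ}

theorem not_onUpperArm_onLowerArm (hpq : p.1 ≠ q.1) (hle : p.2 ≤ q.2)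
    (hp : OnUpperArm v p) (hq : OnLowerArm v q) : False := by
  unfold OnUpperArm at hp
  unfold OnLowerArm at hq
  have hp0 : (p.1 - v.1) ^ 2 = 0 := by nlinarith [sq_nonneg (p.1 - v.1), sq_nonneg (q.1 - v.1)]
  have hq0 : (q.1 - v.1) ^ 2 = 0 := by nlinarith [sq_nonneg (p.1 - v.1), sq_nonneg (q.1 - v.1)]
  exact hpq (by
    linarith [pow_eq_zero_iff two_ne_zero |>.1 hp0, pow_eq_zero_iff two_ne_zero |>.1 hq0])

theorem onLowerArm_of_onLowerArm (hpq : p.1 ≠ q.1) (hle : p.2 ≤ q.2)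
    (hp : p - v ∈ symParabola) (hq : OnLowerArm v q) : OnLowerArm v p :=
  (sub_mem_symParabola_iff.1 hp).resolve_left fun hp => not_onUpperArm_onLowerArm hpq hle hp hq

theorem onUpperArm_of_onUpperArm (hpq : p.1 ≠ q.1) (hle : p.2 ≤ q.2)
    (hq : q - v ∈ symParabola) (hp : OnUpperArm v p) : OnUpperArm v q :=
  (sub_mem_symParabola_iff.1 hq).resolve_right fun hq => not_onUpperArm_onLowerArm hpq hle hp hq

theorem eq_of_onUpperArm (hpq : p.1 ≠ q.1) (hvp : OnUpperArm v p) (hvq : OnUpperArm v q)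
    (hwp : OnUpperArm w p) (hwq : OnUpperArm w q) : v = w := by
  unfold OnUpperArm at *
  have h : (p.1 - q.1) * (w.1 - v.1) = 0 := by linear_combination (hwp - hwq - hvp + hvq) / 2
  have h1 : v.1 = w.1 := by
    linarith [(mul_eq_zero.1 h).resolve_left (sub_ne_zero.2 hpq)]
  exact Prod.ext h1 (by rw [h1] at hvp; linarith)

theorem eq_of_onLowerArm (hpq : p.1 ≠ q.1) (hvp : OnLowerArm v p) (hvq : OnLowerArm v q)
    (hwp : OnLowerArm w p) (hwq : OnLowerArm w q) : v = w := by
  unfold OnLowerArm at *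
  have h : (p.1 - q.1) * (w.1 - v.1) = 0 := by linear_combination (hvp - hvq - hwp + hwq) / 2
  have h1 : v.1 = w.1 := by
    linarith [(mul_eq_zero.1 h).resolve_left (sub_ne_zero.2 hpq)]
  exact Prod.ext h1 (by rw [h1] at hvp; linarith)

theorem onUpperArm_of_onLowerArm_of_ne (hpq : p.1 ≠ q.1) (hle : p.2 ≤ q.2) (hvw : v ≠ w)
    (hvp : OnLowerArm v p) (hvq : OnLowerArm v q) (hwp : p - w ∈ symParabola)
    (hwq : q - w ∈ symParabola) : OnUpperArm w q :=
  (sub_mem_symParabola_iff.1 hwq).resolve_right fun hwq =>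
    hvw (eq_of_onLowerArm hpq hvp hvq (onLowerArm_of_onLowerArm hpq hle hwp hwq) hwq)

theorem onLowerArm_of_onUpperArm_of_ne (hpq : p.1 ≠ q.1) (hle : p.2 ≤ q.2) (hvw : v ≠ w)
    (hvp : OnUpperArm v p) (hvq : OnUpperArm v q) (hwp : p - w ∈ symParabola)
    (hwq : q - w ∈ symParabola) : OnLowerArm w p :=
  (sub_mem_symParabola_iff.1 hwp).resolve_left fun hwp =>
    hvw (eq_of_onUpperArm hpq hvp hvq hwp (onUpperArm_of_onUpperArm hpq hle hwq hwp))

theorem OnLowerArm.sub_snd (hp : OnLowerArm v p) (hq : OnLowerArm v q) :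
    p.2 - q.2 = (q.1 - p.1) * (p.1 + q.1 - 2 * v.1) := by
  unfold OnLowerArm at hp hq
  linear_combination hp - hq

/-- The chord `pq` has slope `2 * v.1 - p.1 - q.1` on the lower arm of `v` and
`p.1 + q.1 - 2 * w.1` on the upper arm of `w`. -/
theorem fst_add_fst_of_onLowerArm_of_onUpperArm (hpq : p.1 ≠ q.1) (hvp : OnLowerArm v p)
    (hvq : OnLowerArm v q) (hwp : OnUpperArm w p) (hwq : OnUpperArm w q) :
    v.1 + w.1 = p.1 + q.1 := by
  unfold OnUpperArm OnLowerArm at *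
  have h : (q.1 - p.1) * (p.1 + q.1 - v.1 - w.1) = 0 := by
    linear_combination (hwp - hwq - hvp + hvq) / 2
  linarith [(mul_eq_zero.1 h).resolve_left (sub_ne_zero.2 hpq.symm)]

/-- Vieta: the abscissae of the vertices of the translates with `p` on the lower and `q` on the
upper arm are the roots of one quadratic. -/
theorem fst_add_fst_of_ne (hvw : v ≠ w) (hvp : OnLowerArm v p) (hvq : OnUpperArm v q)
    (hwp : OnLowerArm w p) (hwq : OnUpperArm w q) : v.1 + w.1 = p.1 + q.1 := by
  unfold OnUpperArm OnLowerArm at *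
  have h : (w.1 - v.1) * (p.1 + q.1 - v.1 - w.1) = 0 := by
    linear_combination (hvp - hvq - hwp + hwq) / 2
  rcases mul_eq_zero.1 h with h | h
  · have h1 : v.1 = w.1 := by linarith
    exact absurd (Prod.ext h1 (by rw [h1] at hvp; linarith)) hvw
  · linarith

theorem not_onLowerArm_onUpperArm_three {u : ℝ × ℝ} (huv : u ≠ v) (huw : u ≠ w) (hvw : v ≠ w)
    (hup : OnLowerArm u p) (huq : OnUpperArm u q) (hvp : OnLowerArm v p)
    (hvq : OnUpperArm v q) (hwp : OnLowerArm w p) (hwq : OnUpperArm w q) : False := by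
  have huv1 := fst_add_fst_of_ne huv hup huq hvp hvq
  have huw1 := fst_add_fst_of_ne huw hup huq hwp hwq
  have hvw1 : v.1 = w.1 := by linarith
  exact hvw (Prod.ext hvw1 (by unfold OnLowerArm at hvp hwp; rw [hvw1] at hvp; linarith))

end Arms

section VerticalPair

variable {p q v w : ℝ × ℝ}

theorem snd_of_fst_eq (h1 : p.1 = q.1) (h2 : p.2 ≠ q.2) (hp : p - v ∈ symParabola)
    (hq : q - v ∈ symParabola) : 2 * v.2 = p.2 + q.2 ∧ 2 * (p.1 - v.1) ^ 2 = |p.2 - q.2| := by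
  rw [sub_mem_symParabola_iff] at hp hq
  unfold OnUpperArm OnLowerArm at hp hq
  rw [← h1] at hq
  rcases hp with hp | hp <;> rcases hq with hq | hq
  · exact absurd (by linarith) h2
  · exact ⟨by linarith, by rw [abs_of_nonneg (by nlinarith [sq_nonneg (p.1 - v.1)])]; linarith⟩
  · exact ⟨by linarith, by rw [abs_of_nonpos (by nlinarith [sq_nonneg (p.1 - v.1)])]; linarith⟩
  · exact absurd (by linarith) h2

theorem fst_add_fst_of_fst_eq (h1 : p.1 = q.1) (h2 : p.2 ≠ q.2) (hvw : v ≠ w)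
    (hvp : p - v ∈ symParabola) (hvq : q - v ∈ symParabola) (hwp : p - w ∈ symParabola)
    (hwq : q - w ∈ symParabola) : v.1 + w.1 = 2 * p.1 ∧ v.2 = w.2 := by
  obtain ⟨hv2, hv1⟩ := snd_of_fst_eq h1 h2 hvp hvq
  obtain ⟨hw2, hw1⟩ := snd_of_fst_eq h1 h2 hwp hwq
  have hvw2 : v.2 = w.2 := by linarith
  rcases sq_eq_sq_iff_eq_or_eq_neg.1 (show (p.1 - v.1) ^ 2 = (p.1 - w.1) ^ 2 by linarith) with h | h
  · exact absurd (Prod.ext (by linarith) hvw2) hvw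
  · exact ⟨by linarith, hvw2⟩

theorem eq_or_eq_or_eq_of_fst_eq {u : ℝ × ℝ} (hpq : p ≠ q) (h1 : p.1 = q.1)
    (hup : p - u ∈ symParabola) (huq : q - u ∈ symParabola) (hvp : p - v ∈ symParabola)
    (hvq : q - v ∈ symParabola) (hwp : p - w ∈ symParabola) (hwq : q - w ∈ symParabola) :
    u = v ∨ u = w ∨ v = w := by
  have h2 : p.2 ≠ q.2 := fun h2 => hpq (Prod.ext h1 h2)
  by_contra! ⟨huv, huw, hvw⟩
  obtain ⟨huv1, huv2⟩ := fst_add_fst_of_fst_eq h1 h2 huv hup huq hvp hvq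
  obtain ⟨huw1, huw2⟩ := fst_add_fst_of_fst_eq h1 h2 huw hup huq hwp hwq
  exact hvw (Prod.ext (by linarith) (huv2.symm.trans huw2))

end VerticalPair

structure QuadCuts where
  pt : Fin 4 → ℝ × ℝ
  full : ℝ × ℝ
  drop : Fin 4 → ℝ × ℝ
  mem_full : ∀ i, pt i - full ∈ symParabola
  mem_drop : ∀ i k, pt i - drop k ∈ symParabola ↔ i ≠ k

structure SortedQuadCuts extends QuadCuts where
  snd_monotone : Monotone fun i => (pt i).2

namespace QuadCuts

variable (c : QuadCuts)

theorem mem_drop_of_ne (i k : Fin 4) (h : i ≠ k := by decide) :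
    c.pt i - c.drop k ∈ symParabola :=
  (c.mem_drop i k).2 h

theorem drop_ne_full (k : Fin 4) : c.drop k ≠ c.full := fun h =>
  (c.mem_drop k k).1 (h ▸ c.mem_full k) rfl

theorem drop_injective : Injective c.drop := fun k l h => by
  by_contra hkl
  exact (c.mem_drop k k).1 (h ▸ c.mem_drop_of_ne k l hkl) rfl

theorem drop_ne (k l : Fin 4) (h : k ≠ l := by decide) : c.drop k ≠ c.drop l :=
  c.drop_injective.ne h

theorem pt_injective : Injective c.pt := fun i k h => by
  by_contra hik
  exact (c.mem_drop k k).1 (h ▸ c.mem_drop_of_ne i k hik) rfl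

theorem fst_injective : Injective fun i => (c.pt i).1 := fun i j h => by
  by_contra hij
  have two_others : ∀ i j : Fin 4, i ≠ j → ∃ k l, k ≠ l ∧ k ≠ i ∧ k ≠ j ∧ l ≠ i ∧ l ≠ j := by
    decide
  obtain ⟨k, l, hkl, hki, hkj, hli, hlj⟩ := two_others i j hij
  rcases eq_or_eq_or_eq_of_fst_eq (c.pt_injective.ne hij) h (c.mem_full i) (c.mem_full j)
      (c.mem_drop_of_ne i k hki.symm) (c.mem_drop_of_ne j k hkj.symm)
      (c.mem_drop_of_ne i l hli.symm) (c.mem_drop_of_ne j l hlj.symm) with h | h | h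
  · exact c.drop_ne_full k h.symm
  · exact c.drop_ne_full l h.symm
  · exact hkl (c.drop_injective h)

noncomputable def sort : SortedQuadCuts where
  pt := c.pt ∘ Tuple.sort fun i => (c.pt i).2
  full := c.full
  drop := c.drop ∘ Tuple.sort fun i => (c.pt i).2
  mem_full _ := c.mem_full _
  mem_drop _ _ := (c.mem_drop _ _).trans (Tuple.sort _).injective.ne_iff
  snd_monotone := Tuple.monotone_sort fun i => (c.pt i).2

end QuadCuts

namespace SortedQuadCuts

variable (c : SortedQuadCuts) {i j : Fin 4} {v w : ℝ × ℝ}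

theorem fst_ne (h : i ≠ j := by decide) : (c.pt i).1 ≠ (c.pt j).1 := c.fst_injective.ne h

theorem onLowerArm_of_lt (hij : i < j) (hi : c.pt i - v ∈ symParabola)
    (hj : OnLowerArm v (c.pt j)) : OnLowerArm v (c.pt i) :=
  onLowerArm_of_onLowerArm (c.fst_ne hij.ne) (c.snd_monotone hij.le) hi hj

theorem onUpperArm_of_lt (hij : i < j) (hj : c.pt j - v ∈ symParabola)
    (hi : OnUpperArm v (c.pt i)) : OnUpperArm v (c.pt j) :=
  onUpperArm_of_onUpperArm (c.fst_ne hij.ne) (c.snd_monotone hij.le) hj hi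

theorem onUpperArm_of_onLowerArm (hij : i < j) (hvw : v ≠ w) (hvi : OnLowerArm v (c.pt i))
    (hvj : OnLowerArm v (c.pt j)) (hwi : c.pt i - w ∈ symParabola)
    (hwj : c.pt j - w ∈ symParabola) : OnUpperArm w (c.pt j) :=
  onUpperArm_of_onLowerArm_of_ne (c.fst_ne hij.ne) (c.snd_monotone hij.le) hvw hvi hvj hwi hwj

theorem onLowerArm_of_onUpperArm (hij : i < j) (hvw : v ≠ w) (hvi : OnUpperArm v (c.pt i))
    (hvj : OnUpperArm v (c.pt j)) (hwi : c.pt i - w ∈ symParabola)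
    (hwj : c.pt j - w ∈ symParabola) : OnLowerArm w (c.pt i) :=
  onLowerArm_of_onUpperArm_of_ne (c.fst_ne hij.ne) (c.snd_monotone hij.le) hvw hvi hvj hwi hwj

theorem onUpperArm_full_two : OnUpperArm c.full (c.pt 2) := by
  refine (sub_mem_symParabola_iff.1 (c.mem_full 2)).resolve_right fun h2 => ?_
  have h0 := c.onLowerArm_of_lt (by decide) (c.mem_full 0) h2
  have h1 := c.onLowerArm_of_lt (by decide) (c.mem_full 1) h2
  have h02 := c.onUpperArm_of_onLowerArm (by decide) (c.drop_ne_full 1).symm h0 h2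
    (c.mem_drop_of_ne 0 1) (c.mem_drop_of_ne 2 1)
  have h12 := c.onUpperArm_of_onLowerArm (by decide) (c.drop_ne_full 0).symm h1 h2
    (c.mem_drop_of_ne 1 0) (c.mem_drop_of_ne 2 0)
  exact (c.drop_ne 0 1) (eq_of_onUpperArm c.fst_ne h12
    (c.onUpperArm_of_lt (by decide) (c.mem_drop_of_ne 3 0) h12) h02
    (c.onUpperArm_of_lt (by decide) (c.mem_drop_of_ne 3 1) h02))

theorem onLowerArm_full_one : OnLowerArm c.full (c.pt 1) := by
  refine (sub_mem_symParabola_iff.1 (c.mem_full 1)).resolve_left fun h1 => ?_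
  have h2 := c.onUpperArm_of_lt (by decide) (c.mem_full 2) h1
  have h3 := c.onUpperArm_of_lt (by decide) (c.mem_full 3) h1
  have h13 := c.onLowerArm_of_onUpperArm (by decide) (c.drop_ne_full 2).symm h1 h3
    (c.mem_drop_of_ne 1 2) (c.mem_drop_of_ne 3 2)
  have h12 := c.onLowerArm_of_onUpperArm (by decide) (c.drop_ne_full 3).symm h1 h2
    (c.mem_drop_of_ne 1 3) (c.mem_drop_of_ne 2 3)
  exact (c.drop_ne 2 3) (eq_of_onLowerArm c.fst_ne
    (c.onLowerArm_of_lt (by decide) (c.mem_drop_of_ne 0 2) h13) h13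
    (c.onLowerArm_of_lt (by decide) (c.mem_drop_of_ne 0 3) h12) h12)

theorem onLowerArm_full (i : Fin 4) (hi : i ≤ 1 := by decide) : OnLowerArm c.full (c.pt i) := by
  rcases hi.lt_or_eq with hi | rfl
  exacts [c.onLowerArm_of_lt hi (c.mem_full i) c.onLowerArm_full_one, c.onLowerArm_full_one]

theorem onUpperArm_full (i : Fin 4) (hi : 2 ≤ i := by decide) : OnUpperArm c.full (c.pt i) := by
  rcases hi.lt_or_eq with hi | rfl
  exacts [c.onUpperArm_of_lt hi (c.mem_full i) c.onUpperArm_full_two, c.onUpperArm_full_two]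

theorem onLowerArm_drop (k i : Fin 4) (hk : k ≤ 1 := by decide) (hi : i ≤ 2 := by decide)
    (hik : i ≠ k := by decide) : OnLowerArm (c.drop k) (c.pt i) := by
  have h2 : OnLowerArm (c.drop k) (c.pt 2) := c.onLowerArm_of_onUpperArm (by decide)
    (c.drop_ne_full k).symm (c.onUpperArm_full 2) (c.onUpperArm_full 3)
    (c.mem_drop_of_ne 2 k (by omega)) (c.mem_drop_of_ne 3 k (by omega))
  rcases hi.lt_or_eq with hi | rfl
  exacts [c.onLowerArm_of_lt hi (c.mem_drop_of_ne i k hik) h2, h2]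

theorem onUpperArm_drop (k i : Fin 4) (hk : 2 ≤ k := by decide) (hi : 1 ≤ i := by decide)
    (hik : i ≠ k := by decide) : OnUpperArm (c.drop k) (c.pt i) := by
  have h1 : OnUpperArm (c.drop k) (c.pt 1) := c.onUpperArm_of_onLowerArm (by decide)
    (c.drop_ne_full k).symm (c.onLowerArm_full 0) (c.onLowerArm_full 1)
    (c.mem_drop_of_ne 0 k (by omega)) (c.mem_drop_of_ne 1 k (by omega))
  rcases hi.lt_or_eq with hi | rfl
  exacts [c.onUpperArm_of_lt hi (c.mem_drop_of_ne i k hik) h1, h1]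

theorem fst_add_fst_drop_zero_three : (c.drop 0).1 + (c.drop 3).1 = (c.pt 1).1 + (c.pt 2).1 :=
  fst_add_fst_of_onLowerArm_of_onUpperArm c.fst_ne (c.onLowerArm_drop 0 1)
    (c.onLowerArm_drop 0 2) (c.onUpperArm_drop 3 1) (c.onUpperArm_drop 3 2)

theorem onLowerArm_drop_three_zero (h : OnUpperArm (c.drop 2) (c.pt 0)) :
    OnLowerArm (c.drop 3) (c.pt 0) :=
  c.onLowerArm_of_onUpperArm (by decide) (c.drop_ne 2 3) h (c.onUpperArm_drop 2 1)
    (c.mem_drop_of_ne 0 3) (c.mem_drop_of_ne 1 3)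

theorem false_of_onUpperArm_drop_one_three (h : OnUpperArm (c.drop 1) (c.pt 3)) : False := by
  have s12 := c.fst_add_fst_drop_zero_three
  rcases sub_mem_symParabola_iff.1 (c.mem_drop_of_ne 0 2) with hC0 | hC0
  · have s02 := fst_add_fst_of_ne (c.drop_ne_full 3).symm (c.onLowerArm_full 0)
      (c.onUpperArm_full 2) (c.onLowerArm_drop_three_zero hC0) (c.onUpperArm_drop 3 2)
    rcases sub_mem_symParabola_iff.1 (c.mem_drop_of_ne 3 0) with hA3 | hA3
    · have s03 := fst_add_fst_of_ne (c.drop_ne_full 1).symm (c.onLowerArm_full 0)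
        (c.onUpperArm_full 3) (c.onLowerArm_drop 1 0) h
      have s23 := fst_add_fst_of_ne (c.drop_ne 0 1) (c.onLowerArm_drop 0 2) hA3
        (c.onLowerArm_drop 1 2) h
      have s13 := fst_add_fst_of_ne (c.drop_ne_full 0).symm (c.onLowerArm_full 1)
        (c.onUpperArm_full 3) (c.onLowerArm_drop 0 1) hA3
      exact (c.fst_ne (i := 1) (j := 2)) (by linarith)
    · have s23 := fst_add_fst_of_onLowerArm_of_onUpperArm c.fst_ne (c.onLowerArm_drop 0 2) hA3
        (c.onUpperArm_full 2) (c.onUpperArm_full 3)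
      have s01 := fst_add_fst_of_onLowerArm_of_onUpperArm c.fst_ne (c.onLowerArm_full 0)
        (c.onLowerArm_full 1) hC0 (c.onUpperArm_drop 2 1)
      have s13 := fst_add_fst_of_onLowerArm_of_onUpperArm c.fst_ne (c.onLowerArm_drop 0 1) hA3
        (c.onUpperArm_drop 2 1) (c.onUpperArm_drop 2 3)
      exact (c.fst_ne (i := 1) (j := 3)) (by linarith)
  · exact not_onLowerArm_onUpperArm_three (c.drop_ne_full 1).symm (c.drop_ne_full 2).symm
      (c.drop_ne 1 2) (c.onLowerArm_full 0) (c.onUpperArm_full 3) (c.onLowerArm_drop 1 0) h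
      hC0 (c.onUpperArm_drop 2 3)

theorem false_of_onLowerArm_drop_one_three (h : OnLowerArm (c.drop 1) (c.pt 3)) : False := by
  have hA3 : OnUpperArm (c.drop 0) (c.pt 3) := c.onUpperArm_of_onLowerArm (by decide)
    (c.drop_ne 1 0) (c.onLowerArm_drop 1 2) h (c.mem_drop_of_ne 2 0) (c.mem_drop_of_ne 3 0)
  have s12 := c.fst_add_fst_drop_zero_three
  have s13 := fst_add_fst_of_ne (c.drop_ne_full 0).symm (c.onLowerArm_full 1)
    (c.onUpperArm_full 3) (c.onLowerArm_drop 0 1) hA3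
  have s23 := fst_add_fst_of_onLowerArm_of_onUpperArm c.fst_ne (c.onLowerArm_drop 1 2) h
    (c.onUpperArm_full 2) (c.onUpperArm_full 3)
  rcases sub_mem_symParabola_iff.1 (c.mem_drop_of_ne 0 2) with hC0 | hC0
  · have s02 := fst_add_fst_of_ne (c.drop_ne_full 3).symm (c.onLowerArm_full 0)
      (c.onUpperArm_full 2) (c.onLowerArm_drop_three_zero hC0) (c.onUpperArm_drop 3 2)
    have c01 := (c.onLowerArm_full 0).sub_snd (c.onLowerArm_full 1)
    have c12 := (c.onLowerArm_drop 0 1).sub_snd (c.onLowerArm_drop 0 2)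
    have c02 := (c.onLowerArm_drop 1 0).sub_snd (c.onLowerArm_drop 1 2)
    set X := fun i => (c.pt i).1
    -- the chords `p0 p1`, `p1 p2`, `p0 p2` of three lower arms close up to a sum of squares
    have hsq : (X 0 - X 1) ^ 2 + (X 0 - X 2) ^ 2 + (X 1 - X 2) ^ 2 = 0 := by
      linear_combination -c01 - c12 + c02 + 2 * (X 0 - X 2) * s23 + 2 * (X 0 - X 1) * s12 +
        2 * (X 1 - X 0) * s02 + 2 * (X 2 - X 0) * s13
    have h01 : (X 0 - X 1) ^ 2 = 0 := by
      nlinarith [sq_nonneg (X 0 - X 1), sq_nonneg (X 0 - X 2), sq_nonneg (X 1 - X 2)]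
    exact (c.fst_ne (i := 0) (j := 1)) (sub_eq_zero.1 (pow_eq_zero_iff two_ne_zero |>.1 h01))
  rcases sub_mem_symParabola_iff.1 (c.mem_drop_of_ne 0 3) with hD0 | hD0
  · have s01 := fst_add_fst_of_onLowerArm_of_onUpperArm c.fst_ne (c.onLowerArm_full 0)
      (c.onLowerArm_full 1) hD0 (c.onUpperArm_drop 3 1)
    have s02 := fst_add_fst_of_onLowerArm_of_onUpperArm c.fst_ne (c.onLowerArm_drop 1 0)
      (c.onLowerArm_drop 1 2) hD0 (c.onUpperArm_drop 3 2)
    exact (c.fst_ne (i := 0) (j := 2)) (by linarith)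
  · have s01 := fst_add_fst_of_ne (c.drop_ne 2 3) hC0 (c.onUpperArm_drop 2 1) hD0
      (c.onUpperArm_drop 3 1)
    have s02 := fst_add_fst_of_ne (c.drop_ne_full 3).symm (c.onLowerArm_full 0)
      (c.onUpperArm_full 2) hD0 (c.onUpperArm_drop 3 2)
    have s03 := fst_add_fst_of_ne (c.drop_ne_full 2).symm (c.onLowerArm_full 0)
      (c.onUpperArm_full 3) hC0 (c.onUpperArm_drop 2 3)
    exact (c.fst_ne (i := 1) (j := 2)) (by linarith)

instance : IsEmpty SortedQuadCuts where
  false c := (sub_mem_symParabola_iff.1 (c.mem_drop_of_ne 3 1)).elim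
    c.false_of_onUpperArm_drop_one_three c.false_of_onLowerArm_drop_one_three

end SortedQuadCuts

theorem exists_set_forall_not_cut (x : Fin 4 → ℝ × ℝ) :
    ∃ I : Set (Fin 4), ∀ y : ℝ × ℝ, ¬ ∀ i, (x i - y ∈ symParabola ↔ i ∈ I) := by
  by_contra! h
  choose y hy using h
  let c : QuadCuts :=
    { pt := x
      full := y Set.univ
      drop := fun k => y {k}ᶜ
      mem_full := fun i => (hy _ i).2 trivial
      mem_drop := fun i k => (hy _ i).trans Set.mem_compl_singleton_iff }
  exact isEmptyElim c.sort

theorem card_lt_of_forall_exists_not_cut {α ι : Type*} {n : ℕ} (c : ι → Set α)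
    (h : ∀ x : Fin n → α, Injective x →
      ∃ I : Set (Fin n), ∀ y, ¬ ∀ i, (x i ∈ c y ↔ i ∈ I))
    (C : Finset α) (hC : ∀ I ⊆ C, ∃ y, ∀ z ∈ C, (z ∈ c y ↔ z ∈ I)) :
    C.card < n := by
  classical
  by_contra! hn
  obtain ⟨e⟩ : Nonempty (Fin n ↪ C) := Embedding.nonempty_of_card_le (by simpa using hn)
  let x i : α := e i
  have hx : Injective x := Subtype.val_injective.comp e.injective
  obtain ⟨I, hI⟩ := h x hx
  obtain ⟨y, hy⟩ := hC ((Finset.univ.filter (· ∈ I)).image x) fun _ hz => by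
    obtain ⟨i, -, rfl⟩ := Finset.mem_image.1 hz
    exact (e i).2
  refine hI y fun i => ?_
  rw [hy _ (e i).2, Finset.mem_image]
  simp only [Finset.mem_filter, Finset.mem_univ, true_and]
  exact ⟨fun ⟨j, hj, hji⟩ => hx hji ▸ hj, fun hi => ⟨i, hi, rfl⟩⟩

/-- no four distinct points of `ℝ²` are shattered by translates of the
symmetrized parabola; consequently the class of translates has VC-dimension ≤ 3. -/
theorem symmetrized_parabola_no_four_shattered :
    (∀ x : Fin 4 → ℝ × ℝ, Function.Injective x →
      ∃ I : Set (Fin 4), ∀ y : ℝ × ℝ,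
        ¬ (∀ i : Fin 4, (x i - y ∈ symParabola ↔ i ∈ I))) ∧
    (∀ C : Finset (ℝ × ℝ),
      (∀ I ⊆ C, ∃ y : ℝ × ℝ, ∀ z ∈ C, (z - y ∈ symParabola ↔ z ∈ I)) →
      C.card ≤ 3) :=
  ⟨fun x _ => exists_set_forall_not_cut x, fun C hC => Nat.le_of_lt_succ <|
    card_lt_of_forall_exists_not_cut (fun y => {z | z - y ∈ symParabola})
      (fun x _ => exists_set_forall_not_cut x) C hC⟩
end

section
/- Let f : ℝ → ℝ be defined by f(t) = t² for t ≥ 0 and f(t) = −t² for t < 0 (i.e., f(t) = t|t|), and let D = {(t, f(t)) : t ∈ ℝ} ⊆ ℝ² be its graph. Then for any two distinct points P, Q ∈ ℝ², there are at most 2 vectors v ∈ ℝ² such that both P ∈ v + D and Q ∈ v + D. -/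
/-!
Since `t ↦ t|t|` is odd, `D` is symmetric about the origin, so if `v` is admissible then so is
`P + Q - v`. Write a non-vertical chord of `D` as running over the abscissae `u ± c` with
`c ≠ 0`: its rise `f (u + c) - f (u - c)` is even in `u` and strictly monotone in `|u|`, so the
chord of `D` with direction vector `Q - P` is unique up to that reflection.
-/

open scoped Pointwise

/-- The graph `D` of `f(t) = t²` for `t ≥ 0`, `f(t) = -t²` for `t < 0`
(i.e. `f(t) = t|t|`). -/
def signedParabolaGraph : Set (ℝ × ℝ) :=
  {p : ℝ × ℝ | ∃ t : ℝ, p = (t, if 0 ≤ t then t ^ 2 else -t ^ 2)}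

open Set

section SignedSq

variable {α : Type*} [CommRing α] [LinearOrder α]

def signedSq (t : α) : α := t * |t|

lemma signedSq_neg (t : α) : signedSq (-t) = -signedSq t := by
  simp [signedSq]

lemma signedSq_add_sub_signedSq_sub_neg (c u : α) :
    signedSq (-u + c) - signedSq (-u - c) = signedSq (u + c) - signedSq (u - c) := by
  rw [show -u + c = -(u - c) by ring, show -u - c = -(u + c) by ring, signedSq_neg, signedSq_neg]
  ring

variable [IsStrictOrderedRing α]

lemma signedSq_of_nonneg {t : α} (ht : 0 ≤ t) : signedSq t = t ^ 2 := by
  rw [signedSq, abs_of_nonneg ht, sq]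

lemma signedSq_sub_signedSq_le (x y : α) :
    signedSq y - signedSq x ≤ |y - x| * (|x| + |y|) :=
  calc signedSq y - signedSq x = (y - x) * |y| + x * (|y| - |x|) := by
        simp only [signedSq]; ring
    _ ≤ |y - x| * |y| + |x| * |y - x| := by
        refine add_le_add (by gcongr; exact le_abs_self _) ?_
        calc x * (|y| - |x|) ≤ |x * (|y| - |x|)| := le_abs_self _
          _ = |x| * |(|y| - |x|)| := abs_mul _ _
          _ ≤ |x| * |y - x| :=
            mul_le_mul_of_nonneg_left (abs_abs_sub_abs_le_abs_sub y x) (abs_nonneg x)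
    _ = |y - x| * (|x| + |y|) := by ring

lemma strictMonoOn_signedSq_add_sub_signedSq_sub {c : α} (hc : 0 < c) :
    StrictMonoOn (fun u ↦ signedSq (u + c) - signedSq (u - c)) (Ici 0) := by
  intro u (hu : 0 ≤ u) w (hw : 0 ≤ w) huw
  have hplus : signedSq (w + c) - signedSq (u + c) = (w - u) * (u + c + (w + c)) := by
    rw [signedSq_of_nonneg (by positivity), signedSq_of_nonneg (by positivity)]; ring
  have hminus := signedSq_sub_signedSq_le (u - c) (w - c)
  have hu' : |u - c| ≤ u + c := abs_sub_le_iff.mpr ⟨by linarith, by linarith⟩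
  have hw' : |w - c| < w + c := abs_sub_lt_iff.mpr ⟨by linarith, by linarith⟩
  have hlt : |w - c - (u - c)| * (|u - c| + |w - c|) < (w - u) * (u + c + (w + c)) := by
    rw [show w - c - (u - c) = w - u by ring, abs_of_pos (sub_pos.mpr huw)]
    exact mul_lt_mul_of_pos_left (add_lt_add_of_le_of_lt hu' hw') (sub_pos.mpr huw)
  show signedSq (u + c) - signedSq (u - c) < signedSq (w + c) - signedSq (w - c)
  linarith

lemma injOn_signedSq_add_sub_signedSq_sub {c : α} (hc : c ≠ 0) :
    InjOn (fun u ↦ signedSq (u + c) - signedSq (u - c)) (Ici 0) := by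
  rcases hc.lt_or_gt with hc | hc
  · have h := neg_injective.comp_injOn (strictMonoOn_signedSq_add_sub_signedSq_sub
      (neg_pos.mpr hc)).injOn
    convert h using 2 with u
    simp only [Function.comp, sub_neg_eq_add, ← sub_eq_add_neg]
    ring
  · exact (strictMonoOn_signedSq_add_sub_signedSq_sub hc).injOn

end SignedSq

lemma eq_or_eq_neg_sub_of_signedSq_add_sub_eq {α : Type*} [Field α] [LinearOrder α]
    [IsStrictOrderedRing α] {a s t : α} (ha : a ≠ 0)
    (h : signedSq (s + a) - signedSq s = signedSq (t + a) - signedSq t) :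
    s = t ∨ s = -a - t := by
  set c := a / 2
  have hcc : c + c = a := add_halves a
  -- recentre at the midpoint `x + c` and fold by evenness
  have key (x : α) : signedSq (x + a) - signedSq x
      = signedSq (|x + c| + c) - signedSq (|x + c| - c) := by
    rcases abs_choice (x + c) with hx | hx <;> rw [hx]
    · congr 2 <;> ring
    · rw [signedSq_add_sub_signedSq_sub_neg]; congr 2 <;> ring
  rw [key, key] at h
  have habs := injOn_signedSq_add_sub_signedSq_sub (c := c) (by positivity) (abs_nonneg _)
    (abs_nonneg _) h
  rcases abs_eq_abs.mp habs with h | h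
  · left; linarith
  · right; linarith

lemma mem_signedParabolaGraph {p : ℝ × ℝ} :
    p ∈ signedParabolaGraph ↔ p.2 = signedSq p.1 := by
  have hite (t : ℝ) : (if 0 ≤ t then t ^ 2 else -t ^ 2) = signedSq t := by
    split_ifs with ht
    · exact (signedSq_of_nonneg ht).symm
    · rw [signedSq, abs_of_neg (not_le.mp ht)]; ring
  constructor
  · rintro ⟨t, rfl⟩
    exact hite t
  · intro hp
    exact ⟨p.1, Prod.ext rfl (hp.trans (hite p.1).symm)⟩

lemma neg_mem_signedParabolaGraph {p : ℝ × ℝ} (hp : p ∈ signedParabolaGraph) :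
    -p ∈ signedParabolaGraph := by
  rw [mem_signedParabolaGraph] at hp ⊢
  simp [hp, signedSq_neg]

lemma eq_of_mem_signedParabolaGraph_of_fst_eq {p q : ℝ × ℝ} (hp : p ∈ signedParabolaGraph)
    (hq : q ∈ signedParabolaGraph) (h : p.1 = q.1) : p = q := by
  rw [mem_signedParabolaGraph] at hp hq
  exact Prod.ext h (by rw [hp, hq, h])

lemma mem_vadd_signedParabolaGraph {v P : ℝ × ℝ} :
    P ∈ v +ᵥ signedParabolaGraph ↔ P - v ∈ signedParabolaGraph := by
  rw [mem_vadd_set_iff_neg_vadd_mem, vadd_eq_add, neg_add_eq_sub]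

lemma eq_or_eq_neg_of_mem_signedParabolaGraph_of_sub_eq {p q p' q' : ℝ × ℝ}
    (hp : p ∈ signedParabolaGraph) (hq : q ∈ signedParabolaGraph)
    (hp' : p' ∈ signedParabolaGraph) (hq' : q' ∈ signedParabolaGraph)
    (hpq : p.1 ≠ q.1) (h : q' - p' = q - p) : p' = p ∨ p' = -q := by
  have h₁ : q'.1 - p'.1 = q.1 - p.1 := congrArg Prod.fst h
  have h₂ : signedSq (p'.1 + (q.1 - p.1)) - signedSq p'.1
      = signedSq (p.1 + (q.1 - p.1)) - signedSq p.1 := by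
    rw [add_sub_cancel, ← h₁, add_sub_cancel, ← mem_signedParabolaGraph.mp hp,
      ← mem_signedParabolaGraph.mp hq, ← mem_signedParabolaGraph.mp hp',
      ← mem_signedParabolaGraph.mp hq']
    exact congrArg Prod.snd h
  rcases eq_or_eq_neg_sub_of_signedSq_add_sub_eq (sub_ne_zero.mpr hpq.symm) h₂ with h | h
  · exact .inl (eq_of_mem_signedParabolaGraph_of_fst_eq hp' hp h)
  · refine .inr (eq_of_mem_signedParabolaGraph_of_fst_eq hp' (neg_mem_signedParabolaGraph hq) ?_)
    simp only [Prod.fst_neg]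
    linarith

/-- for any two distinct points `P, Q ∈ ℝ²`, at most 2 translates of
`D` pass through both `P` and `Q`. -/
theorem signed_parabola_two_translates
    (P Q : ℝ × ℝ) (hPQ : P ≠ Q) :
    ∃ v₁ v₂ : ℝ × ℝ,
      {v : ℝ × ℝ | P ∈ v +ᵥ signedParabolaGraph ∧ Q ∈ v +ᵥ signedParabolaGraph}
        ⊆ {v₁, v₂} := by
  simp only [mem_vadd_signedParabolaGraph]
  rcases eq_empty_or_nonempty
      {v : ℝ × ℝ | P - v ∈ signedParabolaGraph ∧ Q - v ∈ signedParabolaGraph} with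
    hS | ⟨v₀, hP₀, hQ₀⟩
  · exact ⟨0, 0, hS.subset.trans (empty_subset _)⟩
  refine ⟨v₀, P + Q - v₀, fun v ⟨hP, hQ⟩ ↦ ?_⟩
  have hne : (P - v₀).1 ≠ (Q - v₀).1 := fun h ↦
    hPQ (sub_left_injective (eq_of_mem_signedParabolaGraph_of_fst_eq hP₀ hQ₀ h))
  rcases eq_or_eq_neg_of_mem_signedParabolaGraph_of_sub_eq hP₀ hQ₀ hP hQ hne (by abel) with
    h | h
  · exact .inl (sub_right_injective h)
  · refine .inr (show v = P + Q - v₀ from ?_)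
    rw [← sub_sub_cancel P v, h, neg_sub]
    abel
end
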